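/- Let 0 < α < 1 and ξ ∈ ℝ with ξ ≠ 0. Then the integral ∫_ℝ (1 − cos(ξζ))·|ζ|^{α−2} dζ is absolutely convergent and equals −2 sin(πα/2)·Γ(α−1)·|ξ|^{1−α}. (Note Γ(α−1) < 0 for 0 < α < 1, so the right-hand side is positive; this computes the symbol b₁(ξ) = 2 sin(πα/2)Γ(α−1)|ξ|^{1−α} of the linear operator L₁ for the GSQG front equations with 0 < α < 1.) -/

import Mathlib

/-!
Scaling `ζ ↦ ξ ζ` and evenness reduce the claim to computing
`J = ∫₀^∞ (1 - cos t) t^(α-2) dt`. Since `Γ(2-α) t^(α-2) = ∫₀^∞ s^(1-α) e^(-st) ds` and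
`∫₀^∞ (1 - cos t) e^(-st) dt = 1 / (s (1 + s²))`, Fubini gives
`Γ(2-α) J = ∫₀^∞ s^(-α) / (1 + s²) ds`. Writing `1 / (1 + s²) = ∫₀^∞ e^(-v(1+s²)) dv` and
applying Fubini once more turns this into `Γ((1-α)/2) Γ((1+α)/2) / 2`, and Euler's reflection
formula converts both Gamma products into the trigonometric factors of the result.
-/

open MeasureTheory Set Real Function

lemma exp_neg_mul_mul_cos_eq_re (s t : ℝ) :
    exp (-(s * t)) * cos t = (Complex.exp ((-s + Complex.I) * t)).re := by
  rw [Complex.exp_re]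
  simp

lemma integrableOn_exp_neg_mul_mul_cos_Ioi {s : ℝ} (hs : 0 < s) :
    IntegrableOn (fun t : ℝ => exp (-(s * t)) * cos t) (Ioi 0) := by
  simp_rw [exp_neg_mul_mul_cos_eq_re]
  exact (integrableOn_exp_mul_complex_Ioi (by simpa using hs) 0).re

lemma integral_exp_neg_mul_mul_cos_Ioi {s : ℝ} (hs : 0 < s) :
    ∫ t in Ioi (0 : ℝ), exp (-(s * t)) * cos t = s / (1 + s ^ 2) := by
  have hre : (-s + Complex.I).re < 0 := by simpa using hs
  simp_rw [exp_neg_mul_mul_cos_eq_re]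
  calc _ = (∫ t in Ioi (0 : ℝ), Complex.exp ((-s + Complex.I) * t)).re :=
        integral_re (integrableOn_exp_mul_complex_Ioi hre 0)
    _ = _ := by
      rw [integral_exp_mul_complex_Ioi hre 0]
      simp [Complex.div_re, Complex.normSq_apply, sq, add_comm]

lemma integral_exp_neg_mul_Ioi {s : ℝ} (hs : 0 < s) :
    ∫ t in Ioi (0 : ℝ), exp (-(s * t)) = s⁻¹ := by
  simpa [neg_mul] using integral_exp_mul_Ioi (neg_neg_of_pos hs) 0

lemma integrableOn_exp_neg_mul_Ioi {s : ℝ} (hs : 0 < s) :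
    IntegrableOn (fun t : ℝ => exp (-(s * t))) (Ioi 0) := by
  simpa only [neg_mul] using exp_neg_integrableOn_Ioi 0 hs

lemma integrableOn_one_sub_cos_mul_exp_neg_mul_Ioi {s : ℝ} (hs : 0 < s) :
    IntegrableOn (fun t : ℝ => (1 - cos t) * exp (-(s * t))) (Ioi 0) := by
  simp_rw [sub_mul, one_mul, mul_comm (cos _)]
  exact (integrableOn_exp_neg_mul_Ioi hs).sub (integrableOn_exp_neg_mul_mul_cos_Ioi hs)

lemma integral_one_sub_cos_mul_exp_neg_mul_Ioi {s : ℝ} (hs : 0 < s) :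
    ∫ t in Ioi (0 : ℝ), (1 - cos t) * exp (-(s * t)) = (s * (1 + s ^ 2))⁻¹ := by
  simp_rw [sub_mul, one_mul, mul_comm (cos _)]
  rw [integral_sub (integrableOn_exp_neg_mul_Ioi hs) (integrableOn_exp_neg_mul_mul_cos_Ioi hs),
    integral_exp_neg_mul_Ioi hs, integral_exp_neg_mul_mul_cos_Ioi hs]
  field_simp
  ring

lemma integrableOn_one_sub_cos_mul_rpow_Ioi {α : ℝ} (h₁ : -1 < α) (h₂ : α < 1) :
    IntegrableOn (fun t : ℝ => (1 - cos t) * t ^ (α - 2)) (Ioi 0) := by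
  have hmeas : AEStronglyMeasurable (fun t : ℝ => (1 - cos t) * t ^ (α - 2)) :=
    (by fun_prop : Measurable _).aestronglyMeasurable
  rw [← Ioc_union_Ioi_eq_Ioi zero_le_one]
  refine IntegrableOn.union ?_ ?_
  · have hint : IntegrableOn (fun t : ℝ => t ^ α / 2) (Ioc 0 1) := by
      rw [← intervalIntegrable_iff_integrableOn_Ioc_of_le zero_le_one]
      exact (intervalIntegral.intervalIntegrable_rpow' h₁).div_const 2
    refine hint.mono' hmeas.restrict ?_
    filter_upwards [ae_restrict_mem measurableSet_Ioc] with t ht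
    have ht : 0 < t := ht.1
    rw [norm_of_nonneg (mul_nonneg (by linarith [cos_le_one t]) (by positivity))]
    calc (1 - cos t) * t ^ (α - 2) ≤ t ^ 2 / 2 * t ^ (α - 2) := by
          gcongr
          linarith [one_sub_sq_div_two_le_cos (x := t)]
      _ = t ^ α / 2 := by
          rw [← rpow_two, mul_comm, mul_div_assoc', ← rpow_add ht, sub_add_cancel]
  · have hint : IntegrableOn (fun t : ℝ => 2 * t ^ (α - 2)) (Ioi 1) :=
      (integrableOn_Ioi_rpow_of_lt (by linarith) one_pos).const_mul 2
    refine hint.mono' hmeas.restrict ?_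
    filter_upwards [ae_restrict_mem measurableSet_Ioi] with t ht
    have ht : (0 : ℝ) < t := one_pos.trans ht
    rw [norm_of_nonneg (mul_nonneg (by linarith [cos_le_one t]) (by positivity))]
    gcongr
    linarith [neg_one_le_cos t]

lemma integrableOn_rpow_div_one_add_sq_Ioi {p : ℝ} (h₁ : -1 < p) (h₂ : p < 1) :
    IntegrableOn (fun s : ℝ => s ^ p / (1 + s ^ 2)) (Ioi 0) := by
  have hmeas : AEStronglyMeasurable (fun s : ℝ => s ^ p / (1 + s ^ 2)) :=
    (by fun_prop : Measurable _).aestronglyMeasurable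
  rw [← Ioc_union_Ioi_eq_Ioi zero_le_one]
  refine IntegrableOn.union ?_ ?_
  · have hint : IntegrableOn (fun s : ℝ => s ^ p) (Ioc 0 1) := by
      rw [← intervalIntegrable_iff_integrableOn_Ioc_of_le zero_le_one]
      exact intervalIntegral.intervalIntegrable_rpow' h₁
    refine hint.mono' hmeas.restrict ?_
    filter_upwards [ae_restrict_mem measurableSet_Ioc] with s hs
    have hs : 0 < s := hs.1
    rw [norm_of_nonneg (by positivity)]
    exact div_le_self (by positivity) (by nlinarith)
  · refine (integrableOn_Ioi_rpow_of_lt (by linarith : p - 2 < -1) one_pos).mono'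
      hmeas.restrict ?_
    filter_upwards [ae_restrict_mem measurableSet_Ioi] with s hs
    have hs0 : (0 : ℝ) < s := one_pos.trans hs
    rw [norm_of_nonneg (by positivity), rpow_sub hs0, rpow_two]
    gcongr
    linarith

lemma integrable_comp_abs_of_integrableOn_Ioi {E : Type*} [NormedAddCommGroup E] {f : ℝ → E}
    (hf : IntegrableOn f (Ioi 0)) : Integrable (fun x => f |x|) := by
  have hIoi : IntegrableOn (fun x => f |x|) (Ioi 0) :=
    hf.congr_fun (fun x hx => by rw [abs_of_pos hx]) measurableSet_Ioi
  have hIic : IntegrableOn (fun x => f |x|) (Iic 0) := by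
    have hneg : MeasurableEmbedding (Neg.neg : ℝ → ℝ) := (Homeomorph.neg ℝ).measurableEmbedding
    rw [← Measure.map_neg_eq_self (volume : Measure ℝ), hneg.integrableOn_map_iff]
    simp_rw [Function.comp_def, abs_neg, neg_preimage, neg_Iic, neg_zero]
    exact Iff.mpr integrableOn_Ici_iff_integrableOn_Ioi hIoi
  rw [← integrableOn_univ, ← Iic_union_Ioi (a := (0 : ℝ))]
  exact hIic.union hIoi

lemma integral_rpow_div_one_add_sq_Ioi {p : ℝ} (h₁ : -1 < p) (h₂ : p < 1) :
    ∫ s in Ioi (0 : ℝ), s ^ p / (1 + s ^ 2) = π / (2 * cos (π * p / 2)) := by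
  set G : ℝ → ℝ → ℝ := fun v s => exp (-v) * (s ^ p * exp (-v * s ^ 2))
  have hG_nonneg : ∀ v, ∀ s ∈ Ioi (0 : ℝ), 0 ≤ G v s := fun v s hs => by
    have hs : (0 : ℝ) < s := hs
    positivity
  have hG_s : ∀ v ∈ Ioi (0 : ℝ), ∫ s in Ioi 0, G v s
      = exp (-v) * v ^ ((1 - p) / 2 - 1) * (Gamma ((1 + p) / 2) / 2) := by
    intro v hv
    simp_rw [G, ← rpow_two]
    rw [integral_const_mul, integral_rpow_mul_exp_neg_mul_rpow two_pos h₁ hv]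
    ring_nf
  have hG_v : ∀ s ∈ Ioi (0 : ℝ), ∫ v in Ioi 0, G v s = s ^ p / (1 + s ^ 2) := by
    intro s hs
    have h : ∀ v, G v s = s ^ p * exp (-((1 + s ^ 2) * v)) := fun v => by
      simp only [G]
      rw [mul_left_comm, ← exp_add]
      ring_nf
    simp_rw [h]
    rw [integral_const_mul, integral_exp_neg_mul_Ioi (by positivity), div_eq_mul_inv]
  have hG : Integrable (uncurry G) ((volume.restrict (Ioi 0)).prod (volume.restrict (Ioi 0))) := by
    refine (integrable_prod_iff (by fun_prop : Measurable (uncurry G)).aestronglyMeasurable).2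
      ⟨?_, ?_⟩
    · filter_upwards [ae_restrict_mem measurableSet_Ioi] with v hv
      exact (integrableOn_rpow_mul_exp_neg_mul_sq hv h₁).const_mul (exp (-v))
    · refine Integrable.congr (f := fun v => exp (-v) * v ^ ((1 - p) / 2 - 1)
        * (Gamma ((1 + p) / 2) / 2)) ?_ ?_
      · exact (GammaIntegral_convergent (by linarith)).mul_const _
      · filter_upwards [ae_restrict_mem measurableSet_Ioi] with v hv
        rw [← hG_s v hv]
        exact setIntegral_congr_fun measurableSet_Ioi
          fun s hs => (norm_of_nonneg (hG_nonneg v s hs)).symm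
  calc ∫ s in Ioi (0 : ℝ), s ^ p / (1 + s ^ 2) = ∫ s in Ioi 0, ∫ v in Ioi 0, G v s :=
        (setIntegral_congr_fun measurableSet_Ioi hG_v).symm
    _ = ∫ v in Ioi 0, ∫ s in Ioi 0, G v s := (integral_integral_swap hG).symm
    _ = Gamma ((1 + p) / 2) * Gamma ((1 - p) / 2) / 2 := by
      rw [setIntegral_congr_fun measurableSet_Ioi hG_s, integral_mul_const,
        ← Gamma_eq_integral (by linarith)]
      ring
    _ = π / (2 * cos (π * p / 2)) := by
      rw [show (1 - p) / 2 = 1 - (1 + p) / 2 by ring, Gamma_mul_Gamma_one_sub,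
        show π * ((1 + p) / 2) = π * p / 2 + π / 2 by ring, sin_add_pi_div_two]
      ring

lemma Gamma_two_sub_mul_integral_one_sub_cos_mul_rpow_Ioi {α : ℝ} (h₁ : -1 < α) (h₂ : α < 1) :
    Gamma (2 - α) * ∫ t in Ioi (0 : ℝ), (1 - cos t) * t ^ (α - 2)
      = ∫ s in Ioi (0 : ℝ), s ^ (-α) / (1 + s ^ 2) := by
  set F : ℝ → ℝ → ℝ := fun s t => s ^ (1 - α) * ((1 - cos t) * exp (-(s * t)))
  have hF_t : ∀ s ∈ Ioi (0 : ℝ), ∫ t in Ioi 0, F s t = s ^ (-α) / (1 + s ^ 2) := by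
    intro s hs
    have hs : (0 : ℝ) < s := hs
    rw [integral_const_mul, integral_one_sub_cos_mul_exp_neg_mul_Ioi hs, sub_eq_add_neg,
      rpow_add hs, rpow_one]
    field_simp
  have hF_s : ∀ t ∈ Ioi (0 : ℝ),
      ∫ s in Ioi 0, F s t = Gamma (2 - α) * ((1 - cos t) * t ^ (α - 2)) := by
    intro t ht
    have ht : (0 : ℝ) < t := ht
    have h : ∀ s, F s t = (1 - cos t) * (s ^ ((2 - α) - 1) * exp (-(t * s))) := fun s => by
      simp only [F]
      rw [mul_comm t s, show (2 - α) - 1 = 1 - α by ring]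
      ring
    simp_rw [h]
    rw [integral_const_mul, integral_rpow_mul_exp_neg_mul_Ioi (by linarith) ht, one_div,
      inv_rpow ht.le, ← rpow_neg ht.le, neg_sub]
    ring
  have hF : Integrable (uncurry F) ((volume.restrict (Ioi 0)).prod (volume.restrict (Ioi 0))) := by
    refine (integrable_prod_iff (by fun_prop : Measurable (uncurry F)).aestronglyMeasurable).2
      ⟨?_, ?_⟩
    · filter_upwards [ae_restrict_mem measurableSet_Ioi] with s hs
      exact (integrableOn_one_sub_cos_mul_exp_neg_mul_Ioi hs).const_mul (s ^ (1 - α))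
    · refine (integrableOn_rpow_div_one_add_sq_Ioi (p := -α) (by linarith) (by linarith)).congr ?_
      filter_upwards [ae_restrict_mem measurableSet_Ioi] with s hs
      rw [← hF_t s hs]
      refine setIntegral_congr_fun measurableSet_Ioi fun t _ => (norm_of_nonneg ?_).symm
      have hs : (0 : ℝ) < s := hs
      have hcos : 0 ≤ 1 - cos t := by linarith [cos_le_one t]
      positivity
  calc Gamma (2 - α) * ∫ t in Ioi (0 : ℝ), (1 - cos t) * t ^ (α - 2)
      = ∫ t in Ioi 0, ∫ s in Ioi 0, F s t := by
        rw [← integral_const_mul]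
        exact (setIntegral_congr_fun measurableSet_Ioi hF_s).symm
    _ = ∫ s in Ioi 0, ∫ t in Ioi 0, F s t := (integral_integral_swap hF).symm
    _ = ∫ s in Ioi (0 : ℝ), s ^ (-α) / (1 + s ^ 2) := setIntegral_congr_fun measurableSet_Ioi hF_t

lemma integral_one_sub_cos_mul_rpow_Ioi {α : ℝ} (h₁ : -1 < α) (h₂ : α < 1) (h₀ : α ≠ 0) :
    ∫ t in Ioi (0 : ℝ), (1 - cos t) * t ^ (α - 2) = -sin (π * α / 2) * Gamma (α - 1) := by
  have hΓ : 0 < Gamma (2 - α) := Gamma_pos_of_pos (by linarith)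
  have hcos : 0 < cos (π * α / 2) :=
    cos_pos_of_mem_Ioo ⟨by nlinarith [pi_pos], by nlinarith [pi_pos]⟩
  have hsin : sin (π * α / 2) ≠ 0 := by
    rw [Ne, sin_eq_zero_iff_of_lt_of_lt (by nlinarith [pi_pos]) (by nlinarith [pi_pos])]
    exact div_ne_zero (mul_ne_zero pi_ne_zero h₀) two_ne_zero
  have hJ := Gamma_two_sub_mul_integral_one_sub_cos_mul_rpow_Ioi h₁ h₂
  rw [integral_rpow_div_one_add_sq_Ioi (by linarith) (by linarith), mul_neg, neg_div, cos_neg] at hJ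
  have hrefl : Gamma (α - 1) * Gamma (2 - α) = -(π / sin (π * α)) := by
    rw [show 2 - α = 1 - (α - 1) by ring, Gamma_mul_Gamma_one_sub,
      show π * (α - 1) = π * α - π by ring, sin_sub_pi, div_neg]
  rw [show π * α = 2 * (π * α / 2) by ring, sin_two_mul] at hrefl
  apply mul_left_cancel₀ hΓ.ne'
  rw [hJ, show Gamma (2 - α) * (-sin (π * α / 2) * Gamma (α - 1))
    = -sin (π * α / 2) * (Gamma (α - 1) * Gamma (2 - α)) by ring, hrefl]
  field_simp

/-- For `0 < α < 1` and `ξ ≠ 0`, the integral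
`∫_ℝ (1 − cos(ξζ))·|ζ|^{α−2} dζ` is absolutely convergent and equals
`−2 sin(πα/2)·Γ(α−1)·|ξ|^{1−α}`. -/
theorem integral_one_sub_cos_mul_abs_rpow (α : ℝ) (h0 : 0 < α) (h1 : α < 1)
    (ξ : ℝ) (hξ : ξ ≠ 0) :
    Integrable (fun ζ : ℝ => (1 - Real.cos (ξ * ζ)) * |ζ| ^ (α - 2)) ∧
    ∫ ζ : ℝ, (1 - Real.cos (ξ * ζ)) * |ζ| ^ (α - 2) =
      -2 * Real.sin (Real.pi * α / 2) * Real.Gamma (α - 1) * |ξ| ^ (1 - α) := by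
  set f : ℝ → ℝ := fun t => (1 - cos t) * t ^ (α - 2)
  have hscale : (fun ζ : ℝ => (1 - cos (ξ * ζ)) * |ζ| ^ (α - 2))
      = fun ζ => |ξ| ^ (2 - α) * f |ξ * ζ| := by
    funext ζ
    have hξ' : 0 < |ξ| := abs_pos.2 hξ
    simp only [f]
    have hinv : |ξ| ^ (α - 2) = (|ξ| ^ (2 - α))⁻¹ := by rw [← rpow_neg hξ'.le, neg_sub]
    rw [cos_abs, abs_mul, mul_rpow hξ'.le (abs_nonneg ζ), hinv]
    field_simp
  have hf : Integrable (fun x => f |x|) :=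
    integrable_comp_abs_of_integrableOn_Ioi (integrableOn_one_sub_cos_mul_rpow_Ioi (by linarith) h1)
  rw [hscale]
  refine ⟨(hf.comp_mul_left' hξ).const_mul _, ?_⟩
  rw [integral_const_mul, Measure.integral_comp_mul_left (fun x => f |x|), integral_comp_abs,
    integral_one_sub_cos_mul_rpow_Ioi (by linarith) h1 h0.ne', smul_eq_mul, abs_inv,
    show 1 - α = (2 - α) - 1 by ring, rpow_sub_one (abs_ne_zero.2 hξ)]
  ring
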